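/- Let M be a loopless matroid on ground set E, and let F ∈ N(M) (a nonempty flag of nonempty flats of M, ordered by inclusion, with largest element possibly E). Suppose E ∈ F. Then M_F = ⊕_{F ∈ F} M|F / z_F(F), where z_F(F) is the largest element of F strictly below F (or the empty flat if none exists), and M_F is the common initial matroid M_w for w in the relative interior of the cone σ_F spanned by the indicator vectors v_F, F ∈ F. -/

import Mathlib

open Polynomial

namespace MatroidZeta

open scoped Classical

variable {α : Type*}

/-- The `q`-analogue `[n]_q = 1 + q + ⋯ + q^(n-1)` of a natural number `n`, in `ℤ[q]`. -/
noncomputable def qAnalogue (n : ℕ) : Polynomial ℤ := ∑ i ∈ Finset.range n, X ^ i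

/-- The rank of a set `X` in a matroid `M`: the largest size of an independent subset of `X`. -/
noncomputable def rk (M : Matroid α) (X : Set α) : ℕ :=
  sSup {n | ∃ I, M.Indep I ∧ I ⊆ X ∧ I.ncard = n}

/-- Contraction `M / C` of a matroid, defined as the dual of the deletion of `C`
from the dual matroid. -/
noncomputable def contract (M : Matroid α) (C : Set α) : Matroid α :=
  ((M✶.restrict (M✶.E \ C))✶)

/-- A matroid is loopless if no element of the ground set lies in the closure of `∅`. -/
def Loopless (M : Matroid α) : Prop := M.closure ∅ = ∅

/-- The characteristic polynomial `χ_M(q) = ∑_{S ⊆ E} (-1)^{#S} q^(rk M - rk S)`. -/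
noncomputable def charPoly (M : Matroid α) : Polynomial ℤ :=
  ∑ᶠ S ∈ {S : Set α | S ⊆ M.E}, (-1 : ℤ) ^ S.ncard • (X : Polynomial ℤ) ^ (rk M M.E - rk M S)

/-- The reduced characteristic polynomial
`χ̄_M(q) = χ_M(q)/(q-1) = ∑_{S ⊆ E} (-1)^{#S} [rk M - rk S]_q`. -/
noncomputable def redCharPoly (M : Matroid α) : Polynomial ℤ :=
  ∑ᶠ S ∈ {S : Set α | S ⊆ M.E}, (-1 : ℤ) ^ S.ncard • qAnalogue (rk M M.E - rk M S)

/-- `wt_M(w) = max_{B basis of M} ∑_{e ∈ B} w e`. -/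
noncomputable def wt (M : Matroid α) (w : α → ℝ) : ℝ :=
  sSup {x | ∃ B, M.IsBase B ∧ x = ∑ᶠ e ∈ B, w e}

/-- The initial matroid `M_w`: the matroid on the ground set of `M` whose bases are the
bases of `M` of maximal `w`-weight.  (Such a matroid exists and is unique.) -/
noncomputable def initialMatroid (M : Matroid α) (w : α → ℝ) : Matroid α :=
  if h : ∃ N : Matroid α, N.E = M.E ∧
      ∀ B, N.IsBase B ↔ M.IsBase B ∧ ∑ᶠ e ∈ B, w e = wt M w
  then h.choose else M

/-- A flag of non-minimal flats of `M`: a chain of flats strictly above `cl(∅)`. -/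
def IsFlag (M : Matroid α) (C : Finset (Set α)) : Prop :=
  (∀ F ∈ C, M.IsFlat F ∧ M.closure ∅ ⊂ F) ∧ IsChain (· ⊆ ·) (C : Set (Set α))

/-- `N(M)`: the set of flags of non-minimal flats of `M`. -/
def flags (M : Matroid α) : Set (Finset (Set α)) := {C | IsFlag M C}

/-- `N°(M)`: flags not containing the ground set. -/
def flagsCirc (M : Matroid α) : Set (Finset (Set α)) := {C | IsFlag M C ∧ M.E ∉ C}

/-- `N*(M)`: flags containing the ground set. -/
def flagsStar (M : Matroid α) : Set (Finset (Set α)) := {C | IsFlag M C ∧ M.E ∈ C}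

/-- `z_C(F)`: the largest member of the chain `C` strictly below `F` (or `∅` if none). -/
def zmin (C : Finset (Set α)) (F : Set α) : Set α := ⋃₀ {G | G ∈ C ∧ G ⊂ F}

/-- The weight vector `∑_{F ∈ C} v_F`, a point in the relative interior of the cone `σ_C`. -/
noncomputable def flagWeight (C : Finset (Set α)) : α → ℝ :=
  fun e => ∑ F ∈ C, if e ∈ F then (1 : ℝ) else 0

/-- The initial matroid `M_C` of a flag `C`. -/
noncomputable def flagMatroid (M : Matroid α) (C : Finset (Set α)) : Matroid α :=
  initialMatroid M (flagWeight C)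

/-!
A base `B` of the direct sum meets each `F \ z(F)` in a base of `(M ↾ F) ／ z(F)`. Going up the
chain, this says exactly that `B ∩ F` is a basis of `F` for every `F ∈ C`. On the other side, the
weight of a base `B` of `M` is `∑_{F ∈ C} |B ∩ F|`; each term is at most `rk F`, with equality iff
`B ∩ F` is a basis of `F`, and the direct sum provides a base attaining every bound. So the
maximal-weight bases of `M` are exactly the bases of the direct sum.
-/

open Set Matroid

lemma contract_eq_matroid_contract (M : Matroid α) (C : Set α) : contract M C = M ／ C := rfl

theorem _root_.Matroid.IsBasis.contract_isBase_iff {M : Matroid α} {I X J : Set α}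
    (hI : M.IsBasis I X) : (M ／ X).IsBase J ↔ M.IsBase (J ∪ I) ∧ Disjoint J X := by
  have hsdiff : ∀ {J}, Disjoint J X → (J ∪ I) \ X = J := fun hJX => by
    rw [union_sdiff_distrib, hJX.sdiff_eq_left, sdiff_eq_empty.2 hI.subset, union_empty]
  have of_isBase_union : ∀ {J}, M.IsBase (J ∪ I) → Disjoint J X → (M ／ X).IsBase J := by
    intro J hB hJX
    have h := hB.isBasis_ground.contract_isBasis hI (by rw [hsdiff hJX]; exact hB.indep)
    rwa [hsdiff hJX, ← contract_ground, isBasis_ground_iff] at h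
  refine ⟨fun hJ => ?_, fun h => of_isBase_union h.1 h.2⟩
  obtain ⟨hJI, hXJ⟩ := hI.contract_indep_iff.1 hJ.indep
  obtain ⟨B, hB, hJIB⟩ := hJI.exists_isBase_superset
  have hBX : B ∩ X = I :=
    (hI.eq_of_subset_indep (hB.indep.inter_right X)
      (subset_inter (subset_union_right.trans hJIB) hI.subset) inter_subset_right).symm
  have hBdiff : (M ／ X).IsBase (B \ X) :=
    of_isBase_union (by rwa [← hBX, sdiff_union_inter]) disjoint_sdiff_left
  have hJB : J = B \ X :=
    hJ.eq_of_subset_isBase hBdiff (subset_sdiff.2 ⟨subset_union_left.trans hJIB, hXJ.symm⟩)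
  rw [hJB, ← hBX, sdiff_union_inter]
  exact ⟨hB, disjoint_sdiff_left⟩

lemma _root_.Matroid.Indep.ncard_le_ncard_of_isBasis {M : Matroid α} {I J X : Set α}
    (hI : M.Indep I) (hIX : I ⊆ X) (hJ : M.IsBasis J X) (hJfin : J.Finite) :
    I.ncard ≤ J.ncard :=
  ENat.toNat_le_toNat ((hI.encard_le_eRk_of_subset hIX).trans_eq hJ.encard_eq_eRk.symm)
    hJfin.encard_lt_top.ne

lemma _root_.Matroid.IsBasis.isBasis_iff_ncard_eq {M : Matroid α} {I J X : Set α}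
    (hJ : M.IsBasis J X) (hX : X.Finite) (hI : M.Indep I) (hIX : I ⊆ X) :
    M.IsBasis I X ↔ I.ncard = J.ncard := by
  rw [isBasis_iff_indep_encard_eq_of_finite (hX.subset hIX) hJ.subset_ground,
    ← hJ.encard_eq_eRk, ← (hX.subset hIX).cast_ncard_eq, ← (hX.subset hJ.subset).cast_ncard_eq,
    Nat.cast_inj, and_iff_right hIX, and_iff_right hI]

theorem restrict_contract_isBase_iff {M : Matroid α} {B F Z : Set α} (hZF : Z ⊆ F)
    (hF : F ⊆ M.E) (hZ : M.IsBasis (B ∩ Z) Z) :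
    ((M ↾ F) ／ Z).IsBase (B ∩ (F \ Z)) ↔ M.IsBasis (B ∩ F) F := by
  have hZ' : (M ↾ F).IsBasis (B ∩ Z) Z := (isBasis_restrict_iff hF).2 ⟨hZ, hZF⟩
  rw [hZ'.contract_isBase_iff, ← inter_union_distrib_left, sdiff_union_of_subset hZF,
    isBase_restrict_iff hF, and_iff_left (disjoint_sdiff_left.mono_left inter_subset_right)]

section zmin

variable {C : Finset (Set α)} {F : Set α}

lemma zmin_subset : zmin C F ⊆ F := sUnion_subset fun _ hG => hG.2.subset

lemma zmin_eq_empty_or (hC : IsChain (· ⊆ ·) (C : Set (Set α))) (F : Set α) :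
    zmin C F = ∅ ∨ (zmin C F ∈ C ∧ zmin C F ⊂ F) := by
  rcases {G | G ∈ C ∧ G ⊂ F}.eq_empty_or_nonempty with hempty | hne
  · left
    rw [zmin, hempty, sUnion_empty]
  right
  obtain ⟨G₀, hG₀, hmax⟩ := (C.finite_toSet.subset fun G hG => hG.1).exists_maximalFor id _ hne
  have hz : zmin C F = G₀ := by
    refine (sUnion_subset fun G hG => ?_).antisymm (subset_sUnion_of_mem hG₀)
    rcases eq_or_ne G G₀ with rfl | hne'
    · exact Subset.rfl
    · exact (hC hG.1 hG₀.1 hne').resolve_right fun h => hne' ((hmax hG h).antisymm h)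
  rw [hz]
  exact hG₀

lemma exists_mem_sdiff_zmin {e : α} (he : e ∈ F) (hF : F ∈ C) :
    ∃ G ∈ C, e ∈ G \ zmin C G := by
  obtain ⟨G, ⟨hGC, heG⟩, hmin⟩ :=
    (C.finite_toSet.subset fun G hG => hG.1).exists_minimalFor id {G | G ∈ C ∧ e ∈ G}
      ⟨F, hF, he⟩
  refine ⟨G, hGC, heG, fun ⟨H, ⟨hHC, hHG⟩, heH⟩ => ?_⟩
  exact hHG.not_subset (hmin ⟨hHC, heH⟩ hHG.subset)

end zmin

theorem forall_isBase_restrict_contract_zmin_iff {M : Matroid α} {C : Finset (Set α)}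
    (hC : IsChain (· ⊆ ·) (C : Set (Set α))) (hCE : ∀ F ∈ C, F ⊆ M.E) {B : Set α} :
    (∀ F ∈ C, ((M ↾ F) ／ zmin C F).IsBase (B ∩ (F \ zmin C F))) ↔
      ∀ F ∈ C, M.IsBasis (B ∩ F) F := by
  have hz : ∀ F, (∀ G ∈ C, G ⊂ F → M.IsBasis (B ∩ G) G) →
      M.IsBasis (B ∩ zmin C F) (zmin C F) := by
    intro F h
    rcases zmin_eq_empty_or hC F with hempty | ⟨hzC, hzF⟩
    · rw [hempty, inter_empty]
      exact M.empty_indep.isBasis_self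
    · exact h _ hzC hzF
  refine ⟨fun h F hF => ?_, fun h F hF => ?_⟩
  · refine (C.finite_toSet.wellFoundedOn (r := (· ⊂ ·))).induction
      (P := fun F => M.IsBasis (B ∩ F) F) hF fun F hF ih => ?_
    exact (restrict_contract_isBase_iff zmin_subset (hCE F hF) (hz F ih)).1 (h F hF)
  · exact (restrict_contract_isBase_iff zmin_subset (hCE F hF)
      (hz F fun G hG _ => h G hG)).2 (h F hF)

lemma finsum_mem_flagWeight {C : Finset (Set α)} {B : Set α} (hB : B.Finite) :
    ∑ᶠ e ∈ B, flagWeight C e = ∑ F ∈ C, ((B ∩ F).ncard : ℝ) := by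
  rw [← hB.coe_toFinset, finsum_mem_coe_finset]
  simp only [flagWeight]
  rw [Finset.sum_comm]
  refine Finset.sum_congr rfl fun F _ => ?_
  rw [Finset.sum_boole, ← ncard_coe_finset, Finset.coe_filter]
  rfl

lemma wt_eq_of_isBase_of_forall_le {M : Matroid α} {w : α → ℝ} {B₀ : Set α}
    (hB₀ : M.IsBase B₀) (h : ∀ B, M.IsBase B → ∑ᶠ e ∈ B, w e ≤ ∑ᶠ e ∈ B₀, w e) :
    wt M w = ∑ᶠ e ∈ B₀, w e :=
  IsGreatest.csSup_eq ⟨⟨B₀, hB₀, rfl⟩, by rintro _ ⟨B, hB, rfl⟩; exact h B hB⟩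

lemma initialMatroid_eq {M N : Matroid α} {w : α → ℝ} (hE : N.E = M.E)
    (hN : ∀ B, N.IsBase B ↔ M.IsBase B ∧ ∑ᶠ e ∈ B, w e = wt M w) :
    initialMatroid M w = N := by
  have h : ∃ N : Matroid α, N.E = M.E ∧
      ∀ B, N.IsBase B ↔ M.IsBase B ∧ ∑ᶠ e ∈ B, w e = wt M w := ⟨N, hE, hN⟩
  rw [initialMatroid, dif_pos h]
  exact ext_isBase (h.choose_spec.1.trans hE.symm) fun B _ =>
    (h.choose_spec.2 B).trans (hN B).symm

theorem finsum_mem_flagWeight_eq_wt_iff {M : Matroid α} (hE : M.E.Finite) {C : Finset (Set α)}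
    {B₀ B : Set α} (hB₀ : M.IsBase B₀) (hB₀C : ∀ F ∈ C, M.IsBasis (B₀ ∩ F) F)
    (hB : M.IsBase B) :
    ∑ᶠ e ∈ B, flagWeight C e = wt M (flagWeight C) ↔ ∀ F ∈ C, M.IsBasis (B ∩ F) F := by
  have hfin : ∀ F ∈ C, F.Finite := fun F hF => hE.subset (hB₀C F hF).subset_ground
  have hle : ∀ B, M.IsBase B → ∀ F ∈ C, (B ∩ F).ncard ≤ (B₀ ∩ F).ncard := fun B hB F hF =>
    (hB.indep.inter_right F).ncard_le_ncard_of_isBasis inter_subset_right (hB₀C F hF)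
      ((hfin F hF).subset inter_subset_right)
  have hweight : ∀ B, M.IsBase B → ∑ᶠ e ∈ B, flagWeight C e = ∑ F ∈ C, ((B ∩ F).ncard : ℝ) :=
    fun B hB => finsum_mem_flagWeight (hE.subset hB.subset_ground)
  rw [wt_eq_of_isBase_of_forall_le hB₀ fun B hB => ?_, hweight B hB, hweight B₀ hB₀]
  · rw [Finset.sum_eq_sum_iff_of_le fun F hF => Nat.cast_le.2 (hle B hB F hF)]
    refine forall₂_congr fun F hF => ?_
    rw [Nat.cast_inj, (hB₀C F hF).isBasis_iff_ncard_eq (hfin F hF) (hB.indep.inter_right F)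
      inter_subset_right]
  rw [hweight B hB, hweight B₀ hB₀]
  exact Finset.sum_le_sum fun F hF => Nat.cast_le.2 (hle B hB F hF)

theorem flagMatroid_eq_disjointSigma_general (M : Matroid α) (hE : M.E.Finite)
    {C : Finset (Set α)} (hC : IsFlag M C) (hEC : M.E ∈ C)
    (hdis : Pairwise (Function.onFun Disjoint fun F : {F // F ∈ C} =>
      (contract (M.restrict F.1) (zmin C F.1)).E)) :
    flagMatroid M C = Matroid.disjointSigma
      (fun F : {F // F ∈ C} => contract (M.restrict F.1) (zmin C F.1)) hdis := by
  have hCE : ∀ F ∈ C, F ⊆ M.E := fun F hF => (hC.1 F hF).1.subset_ground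
  set N := Matroid.disjointSigma _ hdis
  have hNE : N.E = M.E := by
    simp only [N, disjointSigma_ground_eq, contract_eq_matroid_contract, contract_ground,
      restrict_ground_eq]
    refine subset_antisymm (iUnion_subset fun F => sdiff_subset.trans (hCE F.1 F.2)) fun e he => ?_
    obtain ⟨G, hGC, heG⟩ := exists_mem_sdiff_zmin he hEC
    exact mem_iUnion.2 ⟨⟨G, hGC⟩, heG⟩
  have hN : ∀ B, N.IsBase B ↔ M.IsBase B ∧ ∀ F ∈ C, M.IsBasis (B ∩ F) F := by
    intro B
    rw [disjointSigma_isBase_iff, ← disjointSigma_ground_eq (h := hdis), hNE]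
    simp only [contract_eq_matroid_contract, contract_ground, restrict_ground_eq, Subtype.forall]
    rw [forall_isBase_restrict_contract_zmin_iff hC.2 hCE]
    refine ⟨fun ⟨h, hBE⟩ => ⟨?_, h⟩, fun ⟨hB, h⟩ => ⟨h, hB.subset_ground⟩⟩
    simpa [inter_eq_self_of_subset_left hBE] using h M.E hEC
  obtain ⟨B₀, hB₀⟩ := N.exists_isBase
  obtain ⟨hB₀M, hB₀C⟩ := (hN B₀).1 hB₀
  refine initialMatroid_eq hNE fun B => (hN B).trans (and_congr_right fun hB => ?_)
  exact (finsum_mem_flagWeight_eq_wt_iff hE hB₀M hB₀C hB).symm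

theorem flagMatroid_eq_disjointSigma (M : Matroid α) (hE : M.E.Finite)
    (hM : Loopless M) {C : Finset (Set α)} (hC : IsFlag M C) (hEC : M.E ∈ C)
    (hdis : Pairwise (Function.onFun Disjoint fun F : {F // F ∈ C} =>
      (contract (M.restrict F.1) (zmin C F.1)).E)) :
    flagMatroid M C = Matroid.disjointSigma
      (fun F : {F // F ∈ C} => contract (M.restrict F.1) (zmin C F.1)) hdis :=
  flagMatroid_eq_disjointSigma_general M hE hC hEC hdis

end MatroidZeta
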